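/- For the constant-coefficient modified Lax-Friedrichs scheme, the maximum difference between adjacent grid values is non-increasing in time under the CFL-type condition: if M_n = sup_j |u_{j+1}^n − u_j^n|, then M_{n+1} ≤ M_n, provided v·Δt/(2h) ≤ 1/3. -/
import Mathlib


/-- For the modified Lax-Friedrichs scheme with `0 ≤ μ ≤ 1/3`, the supremum of
adjacent differences is non-increasing in time. -/
theorem LF_adjacent_difference_nonincreasing
    (μ : ℝ) (hμ0 : 0 ≤ μ) (hμ : μ ≤ 1/3)
    (u Lu : ℤ → ℝ)
    (hbdd : BddAbove (Set.range fun j => |u (j+1) - u j|))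
    (hLu : ∀ j : ℤ, Lu j =
      (1/3) * (u (j+1) + u j + u (j-1)) - μ * (u (j+1) - u (j-1))) :
    (⨆ j : ℤ, |Lu (j+1) - Lu j|) ≤ ⨆ j : ℤ, |u (j+1) - u j| := by
  set M := ⨆ j : ℤ, |u (j+1) - u j| with hM
  have hle : ∀ k : ℤ, |u (k+1) - u k| ≤ M := fun k =>
    le_ciSup hbdd k
  apply ciSup_le
  intro j
  have e : Lu (j+1) - Lu j =
      (1/3 - μ) * (u (j+2) - u (j+1)) + (1/3) * (u (j+1) - u j)
        + (1/3 + μ) * (u j - u (j-1)) := by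
    have h1 : j + 1 + 1 = j + 2 := by ring
    have h2 : j + 1 - 1 = j := by ring
    rw [hLu (j+1), hLu j, h1, h2]; ring
  rw [e]
  have b1 : |u (j+2) - u (j+1)| ≤ M := by
    have := hle (j+1); rwa [show j + 1 + 1 = j + 2 from by ring] at this
  have b2 : |u (j+1) - u j| ≤ M := hle j
  have b3 : |u j - u (j-1)| ≤ M := by
    have := hle (j-1); rwa [show j - 1 + 1 = j from by ring] at this
  have h13 : (0:ℝ) ≤ 1/3 - μ := by linarith
  have h13' : (0:ℝ) ≤ 1/3 + μ := by linarith
  calc |(1/3 - μ) * (u (j+2) - u (j+1)) + (1/3) * (u (j+1) - u j)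
        + (1/3 + μ) * (u j - u (j-1))|
      ≤ |(1/3 - μ) * (u (j+2) - u (j+1)) + (1/3) * (u (j+1) - u j)|
        + |(1/3 + μ) * (u j - u (j-1))| := abs_add_le _ _
    _ ≤ |(1/3 - μ) * (u (j+2) - u (j+1))| + |(1/3) * (u (j+1) - u j)|
        + |(1/3 + μ) * (u j - u (j-1))| := by
          gcongr; exact abs_add_le _ _
    _ = (1/3 - μ) * |u (j+2) - u (j+1)| + (1/3) * |u (j+1) - u j|
        + (1/3 + μ) * |u j - u (j-1)| := by
          rw [abs_mul, abs_mul, abs_mul, abs_of_nonneg h13, abs_of_nonneg h13',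
            abs_of_nonneg (by norm_num : (0:ℝ) ≤ 1/3)]
    _ ≤ (1/3 - μ) * M + (1/3) * M + (1/3 + μ) * M := by
          gcongr
    _ = M := by ring
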